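/- arXiv:1212.6328 — 4 statements merged into one kernel-verified Lean document; each statement's English description precedes it below -/
import Mathlib

section
/- Let A be a Noetherian local ring with maximal ideal m_A, let (y_1, …, y_m) be a system of generators of m_A, and let B be a subring of A containing y_1, …, y_m such that y_1, …, y_m generate the ideal B ∩ m_A of B. Then every element f of B admits an admissible expansion f = Σ_{β ∈ ℕ^m} c_β · y_1^{β_1} ⋯ y_m^{β_m} with every coefficient c_β either zero or a unit of A belonging to B; precisely, there exists a family c : (Fin m → ℕ) → A such that for every β either c_β = 0 or (c_β ∈ B and c_β is a unit of A), and for every natural number n the difference f − Σ_{β, β_1+⋯+β_m ≤ n} c_β · y_1^{β_1} ⋯ y_m^{β_m} lies in m_A^{n+1}. -/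
open Finset

private def remAux {R : Type*} [AddCommMonoid R] {m : ℕ}
    (co : R → Fin m → R) (f : R) : ℕ → (Fin m → ℕ) → R
  | 0, β => if β = 0 then f else 0
  | n+1, β => ∑ i, if β i = 0 then 0
      else co (remAux co f n (Function.update β i (β i - 1))) i

private lemma sum_update' {m : ℕ} (β : Fin m → ℕ) (i : Fin m) (k : ℕ) :
    (∑ j, Function.update β i k j) + β i = (∑ j, β j) + k := by
  rw [← Finset.add_sum_erase _ _ (Finset.mem_univ i),
      ← Finset.add_sum_erase _ β (Finset.mem_univ i), Function.update_self]
  have h : ∑ j ∈ Finset.univ.erase i, Function.update β i k j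
      = ∑ j ∈ Finset.univ.erase i, β j :=
    Finset.sum_congr rfl fun j hj => by
      rw [Function.update_of_ne (Finset.mem_erase.1 hj).1]
  rw [h]; omega

private lemma prod_pow_succ {m : ℕ} {A : Type*} [CommMonoid A] (y : Fin m → A)
    (β : Fin m → ℕ) (i : Fin m) :
    ∏ j, y j ^ (Function.update β i (β i + 1) j) = y i * ∏ j, y j ^ β j := by
  rw [← Finset.mul_prod_erase _ _ (Finset.mem_univ i),
      ← Finset.mul_prod_erase _ (fun j => y j ^ β j) (Finset.mem_univ i),
      Function.update_self]
  have h : ∏ j ∈ Finset.univ.erase i, y j ^ (Function.update β i (β i + 1) j)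
      = ∏ j ∈ Finset.univ.erase i, y j ^ β j :=
    Finset.prod_congr rfl fun j hj => by
      rw [Function.update_of_ne (Finset.mem_erase.1 hj).1]
  rw [h, pow_succ', mul_assoc]

private lemma prod_pow_mem {A : Type*} [CommRing A] (I : Ideal A) {m : ℕ}
    (y : Fin m → A) (hy : ∀ i, y i ∈ I) (β : Fin m → ℕ) :
    (∏ i, y i ^ β i) ∈ I ^ (∑ i, β i) := by
  classical
  suffices h : ∀ s : Finset (Fin m), (∏ i ∈ s, y i ^ β i) ∈ I ^ (∑ i ∈ s, β i) from h univ
  intro s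
  induction s using Finset.induction_on with
  | empty => simp
  | @insert a s hx ih =>
    rw [Finset.prod_insert hx, Finset.sum_insert hx, pow_add]
    exact Ideal.mul_mem_mul (Ideal.pow_mem_pow (hy _) _) ih

/-- **Lemma 2.4.3.** Let `A` be a Noetherian local ring with maximal ideal `m_A`
generated by `y 0, …, y (m-1)`, and let `B` be a subring of `A` containing the `y i`
such that the `y i` generate the ideal `B ∩ m_A` of `B`. Then every `f ∈ B` admits an
admissible expansion `f = Σ_β c_β y^β` with each `c_β` zero or a unit of `A` lying in `B`,
in the sense that the partial sums of total degree `≤ n` agree with `f` modulo `m_A ^ (n+1)`. -/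
theorem admissible_expansion_of_subring
    (A : Type*) [CommRing A] [IsNoetherianRing A] [IsLocalRing A]
    (m : ℕ) (y : Fin m → A)
    (hy : Ideal.span (Set.range y) = IsLocalRing.maximalIdeal A)
    (B : Subring A) (hyB : ∀ i, y i ∈ B)
    (hgen : Ideal.span (Set.range fun i => (⟨y i, hyB i⟩ : B)) =
      (IsLocalRing.maximalIdeal A).comap B.subtype)
    (f : A) (hf : f ∈ B) :
    ∃ c : (Fin m → ℕ) → A,
      (∀ β, c β = 0 ∨ (c β ∈ B ∧ IsUnit (c β))) ∧
      ∀ n : ℕ,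
        f - ∑ β ∈ (Fintype.piFinset fun _ : Fin m => Finset.range (n + 1)).filter
              (fun β => ∑ i, β i ≤ n),
            c β * ∏ i, y i ^ β i
          ∈ IsLocalRing.maximalIdeal A ^ (n + 1) := by
  classical
  -- digit extraction: every element of B is (zero or unit) plus a B-combination of the y i
  have key : ∀ r : B, ∃ d : B, ∃ cf : Fin m → B,
      ((d : A) = 0 ∨ IsUnit (d : A)) ∧ (r : A) = d + ∑ i, (cf i : A) * y i := by
    intro r
    by_cases h : IsUnit (r : A)
    · exact ⟨r, 0, Or.inr h, by simp⟩
    · have hr : r ∈ Ideal.span (Set.range fun i => (⟨y i, hyB i⟩ : B)) := by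
        rw [hgen, Ideal.mem_comap]
        exact h
      obtain ⟨cfun, hcf⟩ := (Submodule.mem_span_range_iff_exists_fun B).1 hr
      refine ⟨0, cfun, Or.inl rfl, ?_⟩
      have h2 : ((∑ i, cfun i • (⟨y i, hyB i⟩ : B) : B) : A) = (r : A) := by
        exact_mod_cast congrArg (fun b : B => (b : A)) hcf
      rw [← h2]
      push_cast [smul_eq_mul]
      simp
  choose dig cf hdig hrep using key
  -- the remainder tower
  set R : ℕ → (Fin m → ℕ) → B := remAux cf ⟨f, hf⟩ with hRdef
  -- the coefficients
  set c : (Fin m → ℕ) → A := fun β => (dig (R (∑ i, β i) β) : A) with hcdef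
  -- degree slices
  set D : ℕ → Finset (Fin m → ℕ) := fun n =>
    (Fintype.piFinset fun _ : Fin m => Finset.range (n+1)).filter fun β => ∑ i, β i < n
    with hDdef
  set E : ℕ → Finset (Fin m → ℕ) := fun n =>
    (Fintype.piFinset fun _ : Fin m => Finset.range (n+1)).filter fun β => ∑ i, β i = n
    with hEdef
  have memD : ∀ n β, β ∈ D n ↔ ∑ i, β i < n := by
    intro n β
    rw [hDdef]
    simp only [Finset.mem_filter, Fintype.mem_piFinset, Finset.mem_range]
    constructor
    · exact fun h => h.2
    · intro h
      refine ⟨fun i => ?_, h⟩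
      have := Finset.single_le_sum (f := β) (fun j _ => Nat.zero_le _) (Finset.mem_univ i)
      omega
  have memE : ∀ n β, β ∈ E n ↔ ∑ i, β i = n := by
    intro n β
    rw [hEdef]
    simp only [Finset.mem_filter, Fintype.mem_piFinset, Finset.mem_range]
    constructor
    · exact fun h => h.2
    · intro h
      refine ⟨fun i => ?_, h⟩
      have := Finset.single_le_sum (f := β) (fun j _ => Nat.zero_le _) (Finset.mem_univ i)
      omega
  -- the main invariant
  have inv : ∀ n, f = (∑ β ∈ D n, c β * ∏ i, y i ^ β i)
      + ∑ β ∈ E n, (R n β : A) * ∏ i, y i ^ β i := by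
    intro n
    induction n with
    | zero =>
      have hD0 : D 0 = ∅ := by
        ext β; simp [memD 0 β]
      have hE0 : E 0 = {fun _ => 0} := by
        ext β
        rw [memE 0 β, Finset.mem_singleton]
        constructor
        · intro h
          funext i
          have := Finset.single_le_sum (f := β) (fun j _ => Nat.zero_le _) (Finset.mem_univ i)
          omega
        · intro h; subst h; simp
      rw [hD0, hE0, Finset.sum_empty, Finset.sum_singleton, zero_add]
      have : R 0 (fun _ => 0) = ⟨f, hf⟩ := by
        rw [hRdef]
        show remAux cf ⟨f, hf⟩ 0 (fun _ => 0) = ⟨f, hf⟩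
        simp only [remAux]
        exact if_pos rfl
      rw [this]
      simp
    | succ n ih =>
      -- split D (n+1) = D n ∪ E n
      have hsplit : D (n+1) = D n ∪ E n := by
        ext β
        rw [memD, Finset.mem_union, memD, memE]
        omega
      have hdisj : Disjoint (D n) (E n) := by
        rw [Finset.disjoint_left]
        intro β h1 h2
        rw [memD] at h1; rw [memE] at h2
        omega
      rw [hsplit, Finset.sum_union hdisj, add_assoc]
      rw [ih]
      congr 1
      -- expand R n β on E n
      have h1 : ∀ β ∈ E n, (R n β : A) * ∏ i, y i ^ β i
          = c β * ∏ i, y i ^ β i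
            + ∑ i, (cf (R n β) i : A) * (y i * ∏ j, y j ^ β j) := by
        intro β hβ
        have hβn : ∑ i, β i = n := (memE n β).1 hβ
        rw [hrep (R n β), hcdef]
        simp only [hβn]
        rw [add_mul, Finset.sum_mul]
        congr 1
        refine Finset.sum_congr rfl fun i _ => ?_
        ring
      rw [Finset.sum_congr rfl h1, Finset.sum_add_distrib]
      congr 1
      -- the reindexing of the degree-(n+1) part
      have hRsucc : ∀ γ, (R (n+1) γ : A)
          = ∑ i, if γ i = 0 then 0
              else (cf (R n (Function.update γ i (γ i - 1))) i : A) := by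
        intro γ
        rw [hRdef]
        show ((remAux cf ⟨f, hf⟩ (n+1) γ : B) : A) = _
        rw [remAux]
        push_cast
        refine Finset.sum_congr rfl fun i _ => ?_
        split <;> simp
      calc ∑ β ∈ E n, ∑ i, (cf (R n β) i : A) * (y i * ∏ j, y j ^ β j)
          = ∑ p ∈ E n ×ˢ (univ : Finset (Fin m)),
              (cf (R n p.1) p.2 : A) * (y p.2 * ∏ j, y j ^ p.1 j) := by
            rw [Finset.sum_product]
        _ = ∑ p ∈ ((E (n+1) ×ˢ (univ : Finset (Fin m))).filter fun p => p.1 p.2 ≠ 0),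
              (if p.1 p.2 = 0 then 0
                else (cf (R n (Function.update p.1 p.2 (p.1 p.2 - 1))) p.2 : A))
                * ∏ j, y j ^ p.1 j := by
            refine Finset.sum_nbij'
              (fun p => (Function.update p.1 p.2 (p.1 p.2 + 1), p.2))
              (fun q => (Function.update q.1 q.2 (q.1 q.2 - 1), q.2))
              ?_ ?_ ?_ ?_ ?_
            · rintro ⟨β, i⟩ hp
              simp only [Finset.mem_product] at hp
              have hβn : ∑ j, β j = n := (memE n β).1 hp.1
              simp only [Finset.mem_filter, Finset.mem_product, Finset.mem_univ, and_true]
              have hs := sum_update' β i (β i + 1)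
              refine ⟨(memE _ _).2 (by omega), ?_⟩
              simp
            · rintro ⟨γ, i⟩ hq
              simp only [Finset.mem_filter, Finset.mem_product, Finset.mem_univ, and_true] at hq
              have hγ : ∑ j, γ j = n + 1 := (memE _ _).1 hq.1
              simp only [Finset.mem_product, Finset.mem_univ, and_true]
              have hs := sum_update' γ i (γ i - 1)
              refine (memE _ _).2 ?_
              have := hq.2
              omega
            · rintro ⟨β, i⟩ _
              simp [Function.update_idem]
            · rintro ⟨γ, i⟩ hq
              simp only [Finset.mem_filter, Finset.mem_product] at hq
              have := hq.2
              simp only [Function.update_idem, Function.update_self]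
              have h3 : γ i - 1 + 1 = γ i := by omega
              rw [h3]
              simp [Function.update_eq_self]
            · rintro ⟨β, i⟩ _
              simp only [Function.update_self, Function.update_idem, Nat.add_sub_cancel,
                Function.update_eq_self]
              rw [if_neg (by omega), prod_pow_succ]
        _ = ∑ p ∈ E (n+1) ×ˢ (univ : Finset (Fin m)),
              (if p.1 p.2 = 0 then 0
                else (cf (R n (Function.update p.1 p.2 (p.1 p.2 - 1))) p.2 : A))
                * ∏ j, y j ^ p.1 j := by
            refine Finset.sum_filter_of_ne ?_
            rintro ⟨γ, i⟩ _ hne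
            intro h0
            apply hne
            rw [if_pos h0, zero_mul]
        _ = ∑ γ ∈ E (n+1), (R (n+1) γ : A) * ∏ j, y j ^ γ j := by
            rw [Finset.sum_product]
            refine Finset.sum_congr rfl fun γ _ => ?_
            rw [hRsucc γ, Finset.sum_mul]
  refine ⟨c, fun β => ?_, fun n => ?_⟩
  · rcases hdig (R (∑ i, β i) β) with h | h
    · exact Or.inl h
    · exact Or.inr ⟨SetLike.coe_mem _, h⟩
  · have hset : (Fintype.piFinset fun _ : Fin m => Finset.range (n + 1)).filter
        (fun β => ∑ i, β i ≤ n) = D (n+1) := by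
      ext β
      rw [memD]
      simp only [Finset.mem_filter, Fintype.mem_piFinset, Finset.mem_range]
      constructor
      · intro h; omega
      · intro h
        refine ⟨fun i => ?_, by omega⟩
        have := Finset.single_le_sum (f := β) (fun j _ => Nat.zero_le _) (Finset.mem_univ i)
        omega
    rw [hset]
    have hsub : f - ∑ β ∈ D (n+1), c β * ∏ i, y i ^ β i
        = ∑ β ∈ E (n+1), (R (n+1) β : A) * ∏ i, y i ^ β i := by
      rw [inv (n+1)]; ring
    rw [hsub]
    refine Ideal.sum_mem _ fun β hβ => Ideal.mul_mem_left _ _ ?_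
    have hβ' := (memE _ β).1 hβ
    have hmem := prod_pow_mem (IsLocalRing.maximalIdeal A) y
      (fun i => by rw [← hy]; exact Ideal.subset_span ⟨i, rfl⟩) β
    rwa [hβ'] at hmem
end

section
/- Let A be a Noetherian local ring with maximal ideal m, assume A is m-adically complete (IsAdicComplete m A), equip A with the m-adic topology, and let y_1, …, y_m be generators of m. Then every element f of A is admissible: there exists a family c : (Fin m → ℕ) → A such that every c_β is either zero or a unit of A, and the family (c_β · y_1^{β_1} ⋯ y_m^{β_m})_{β ∈ ℕ^m} has sum f (HasSum) in the m-adic topology of A. -/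
/-!
Successive approximation. Since the `y i` generate `m`, every `r ∈ m ^ n` is a combination
`Σ_{|β| = n} g β * y ^ β`; keeping `g β` when it is a unit and replacing it by `0` otherwise
changes `r` only by an element of `m ^ (n + 1)`, because the discarded coefficients lie in `m`.
Starting from `r = f` and iterating produces coefficients whose partial sums over `|β| < n`
agree with `f` modulo `m ^ n`, which is convergence in the `m`-adic topology.
-/

open Finset

section

variable {A ι : Type*} [CommRing A] [Fintype ι]

theorem prod_pow_mem_span_range_pow (y : ι → A) (β : ι → ℕ) :
    ∏ i, y i ^ β i ∈ Ideal.span (Set.range y) ^ ∑ i, β i := by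
  rw [← prod_pow_eq_pow_sum]
  exact Ideal.prod_mem_prod fun i _ =>
    Ideal.pow_mem_pow (Ideal.subset_span (Set.mem_range_self i)) _

variable [DecidableEq ι]

theorem exists_sum_piAntidiag_eq_of_mem_span_range_pow {y : ι → A} {n : ℕ} {r : A}
    (hr : r ∈ Ideal.span (Set.range y) ^ n) :
    ∃ g : (ι → ℕ) → A, ∑ β ∈ piAntidiag univ n, g β * ∏ i, y i ^ β i = r := by
  obtain ⟨p, hp, rfl⟩ := (Ideal.mem_span_pow_iff_exists_isHomogeneous y r).mp hr
  let e : (ι →₀ ℕ) ≃ (ι → ℕ) := Finsupp.equivFunOnFinite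
  have hsupp : p.support ⊆ (piAntidiag univ n).map e.symm.toEmbedding := fun d hd => by
    have hdeg : d.degree = n :=
      by_contra fun h => MvPolynomial.mem_support_iff.mp hd (hp.coeff_eq_zero h)
    rw [Finsupp.degree_eq_sum] at hdeg
    simpa [e] using hdeg
  refine ⟨fun β => p.coeff (e.symm β), ?_⟩
  rw [MvPolynomial.eval_eq', sum_subset hsupp fun d _ hd => by
    rw [MvPolynomial.notMem_support_iff.mp hd, zero_mul], sum_map]
  rfl

theorem exists_sum_piAntidiag_sub_mem_pow_succ {I : Ideal A} {y : ι → A}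
    (hy : Ideal.span (Set.range y) = I) {P : A → Prop} (hP : ∀ x, ∃ u, P u ∧ x - u ∈ I)
    {n : ℕ} {r : A} (hr : r ∈ I ^ n) :
    ∃ a : (ι → ℕ) → A, (∀ β, P (a β)) ∧
      r - ∑ β ∈ piAntidiag univ n, a β * ∏ i, y i ^ β i ∈ I ^ (n + 1) := by
  choose u hPu hu using hP
  obtain ⟨g, rfl⟩ := exists_sum_piAntidiag_eq_of_mem_span_range_pow (hy ▸ hr : r ∈ _)
  refine ⟨fun β => u (g β), fun β => hPu _, ?_⟩
  rw [← sum_sub_distrib, pow_succ']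
  refine Ideal.sum_mem _ fun β hβ => ?_
  rw [← sub_mul]
  have hdeg : ∑ i, β i = n := by simpa using hβ
  exact Ideal.mul_mem_mul (hu _) (hy ▸ hdeg ▸ prod_pow_mem_span_range_pow y β)

theorem exists_forall_sub_sum_mem_pow {I : Ideal A} {y : ι → A}
    (hy : Ideal.span (Set.range y) = I) {P : A → Prop} (hP : ∀ x, ∃ u, P u ∧ x - u ∈ I)
    (f : A) :
    ∃ c : (ι → ℕ) → A, (∀ β, P (c β)) ∧
      ∀ n, f - ∑ k ∈ range n, ∑ β ∈ piAntidiag univ k, c β * ∏ i, y i ^ β i ∈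
        I ^ n := by
  choose! a haP ha using fun n r (hr : r ∈ I ^ n) =>
    exists_sum_piAntidiag_sub_mem_pow_succ hy hP hr
  let rem : ℕ → A := fun n => Nat.rec f
    (fun k r => r - ∑ β ∈ piAntidiag univ k, a k r β * ∏ i, y i ^ β i) n
  have rem_mem (n : ℕ) : rem n ∈ I ^ n := by
    induction n with
    | zero => simp [rem]
    | succ k ih => exact ha k _ ih
  refine ⟨fun β => a (∑ i, β i) (rem (∑ i, β i)) β, fun β => haP _ _ (rem_mem _) β,
    fun n => ?_⟩
  suffices f - ∑ k ∈ range n, ∑ β ∈ piAntidiag univ k,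
      a (∑ i, β i) (rem (∑ i, β i)) β * ∏ i, y i ^ β i = rem n from this ▸ rem_mem n
  induction n with
  | zero => simp [rem]
  | succ k ih =>
    have hk :
        ∑ β ∈ piAntidiag univ k, a (∑ i, β i) (rem (∑ i, β i)) β * ∏ i, y i ^ β i
        = ∑ β ∈ piAntidiag univ k, a k (rem k) β * ∏ i, y i ^ β i :=
      sum_congr rfl fun β hβ => by rw [(by simpa using hβ : ∑ i, β i = k)]
    rw [sum_range_succ, hk, ← sub_sub, ih]

theorem pairwiseDisjoint_piAntidiag_univ (s : Set ℕ) :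
    s.PairwiseDisjoint fun n => piAntidiag (univ : Finset ι) n := by
  intro k _ l _ hkl
  simp only [Function.onFun, disjoint_left, mem_piAntidiag]
  rintro β ⟨rfl, -⟩ ⟨rfl, -⟩
  exact hkl rfl

theorem hasSum_adic_of_sub_sum_mem_pow {I : Ideal A} {g : (ι → ℕ) → A} {f : A}
    (hg : ∀ β, g β ∈ I ^ ∑ i, β i)
    (hf : ∀ n, f - ∑ k ∈ range n, ∑ β ∈ piAntidiag univ k, g β ∈ I ^ n) :
    @HasSum A (ι → ℕ) _ I.adicTopology g f (SummationFilter.unconditional (ι → ℕ)) := by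
  show Filter.Tendsto (fun s => ∑ β ∈ s, g β) Filter.atTop (@nhds A I.adicTopology f)
  rw [(I.hasBasis_nhds_adic f).tendsto_right_iff]
  intro n _
  set S := (range n).biUnion fun k => piAntidiag (univ : Finset ι) k
  filter_upwards [Filter.eventually_ge_atTop S] with t hSt
  have htail : ∑ β ∈ t \ S, g β ∈ I ^ n := by
    refine Ideal.sum_mem _ fun β hβ => Ideal.pow_le_pow_right ?_ (hg β)
    by_contra! hlt
    exact (mem_sdiff.mp hβ).2 (mem_biUnion.mpr ⟨_, mem_range.mpr hlt, by simp⟩)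
  have hhead : ∑ β ∈ S, g β = ∑ k ∈ range n, ∑ β ∈ piAntidiag univ k, g β :=
    sum_biUnion (pairwiseDisjoint_piAntidiag_univ _)
  refine ⟨∑ β ∈ t \ S, g β - (f - ∑ β ∈ S, g β), ?_, ?_⟩
  · exact Ideal.sub_mem _ htail (hhead ▸ hf n)
  · rw [← sum_sdiff hSt]
    ring

theorem exists_hasSum_prod_pow {I : Ideal A} {y : ι → A}
    (hy : Ideal.span (Set.range y) = I) {P : A → Prop} (hP : ∀ x, ∃ u, P u ∧ x - u ∈ I)
    (f : A) :
    ∃ c : (ι → ℕ) → A, (∀ β, P (c β)) ∧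
      @HasSum A (ι → ℕ) _ I.adicTopology (fun β => c β * ∏ i, y i ^ β i) f
        (SummationFilter.unconditional (ι → ℕ)) := by
  obtain ⟨c, hcP, hc⟩ := exists_forall_sub_sum_mem_pow hy hP f
  exact ⟨c, hcP, hasSum_adic_of_sub_sum_mem_pow
    (fun β => Ideal.mul_mem_left _ _ (hy ▸ prod_pow_mem_span_range_pow y β)) hc⟩

end

theorem IsLocalRing.exists_eq_zero_or_isUnit_sub_mem_maximalIdeal {A : Type*} [CommRing A]
    [IsLocalRing A] (x : A) :
    ∃ u, (u = 0 ∨ IsUnit u) ∧ x - u ∈ IsLocalRing.maximalIdeal A := by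
  by_cases hx : IsUnit x
  · exact ⟨x, .inr hx, by simp⟩
  · exact ⟨0, .inl rfl, by simpa using hx⟩

theorem admissible_expansion_of_complete_general
    (A : Type*) [CommRing A] [IsLocalRing A]
    (m : ℕ) (y : Fin m → A)
    (hy : Ideal.span (Set.range y) = IsLocalRing.maximalIdeal A)
    (f : A) :
    ∃ c : (Fin m → ℕ) → A,
      (∀ β, c β = 0 ∨ IsUnit (c β)) ∧
      @HasSum A (Fin m → ℕ) _ ((IsLocalRing.maximalIdeal A).adicTopology)
        (fun β => c β * ∏ i, y i ^ β i) f (SummationFilter.unconditional (Fin m → ℕ)) :=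
  exists_hasSum_prod_pow hy IsLocalRing.exists_eq_zero_or_isUnit_sub_mem_maximalIdeal f

/-- **Proposition 2.4.4(1)** (in the complete local ring).  Let `A` be a Noetherian local
ring with maximal ideal `m`, complete for the `m`-adic topology, and let `y 0, …, y (m-1)`
generate `m`.  Then every element `f` of `A` is admissible: it has an expansion
`f = Σ_β c_β y^β`, convergent for the `m`-adic topology, in which each coefficient `c_β`
is either zero or a unit of `A`. -/
theorem admissible_expansion_of_complete
    (A : Type*) [CommRing A] [IsNoetherianRing A] [IsLocalRing A]
    [IsAdicComplete (IsLocalRing.maximalIdeal A) A]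
    (m : ℕ) (y : Fin m → A)
    (hy : Ideal.span (Set.range y) = IsLocalRing.maximalIdeal A)
    (f : A) :
    ∃ c : (Fin m → ℕ) → A,
      (∀ β, c β = 0 ∨ IsUnit (c β)) ∧
      @HasSum A (Fin m → ℕ) _ ((IsLocalRing.maximalIdeal A).adicTopology)
        (fun β => c β * ∏ i, y i ^ β i) f (SummationFilter.unconditional (Fin m → ℕ)) :=
  admissible_expansion_of_complete_general A m y hy f
end

section
/- Let k be a field, let r be a positive integer, and let α : Fin r → ℝ satisfy α i > 0 for every i. For nonzero f, g in MvPowerSeries (Fin r) k, the α-initial form of the product equals the product of the α-initial forms: in_α(f * g) = in_α(f) * in_α(g). -/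
/-! Since the weights `α i` are positive, only finitely many exponents have weight below a given
bound, so the infimum `wOrd α f` is attained and `initForm α f ≠ 0`. A term
`coeff γ f * coeff δ g` of the coefficient of `f * g` at `γ + δ` vanishes unless
`wOrd α f ≤ weight γ` and `wOrd α g ≤ weight δ`. Hence the coefficients of `f * g` vanish below
weight `wOrd α f + wOrd α g`, and at that weight they are those of `initForm α f * initForm α g`,
which is nonzero because power series over a field form a domain. So
`wOrd α (f * g) = wOrd α f + wOrd α g`, and both sides of the identity have the same coefficients.
-/

open Classical in
/-- The α-weighted order `w_α(f) = inf { ∑ i, α i * β i : coeff β f ≠ 0 }` of a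
multivariate formal power series. -/
noncomputable def wOrd {k : Type*} [Field k] {r : ℕ} (α : Fin r → ℝ)
    (f : MvPowerSeries (Fin r) k) : ℝ :=
  sInf {x : ℝ | ∃ β : Fin r →₀ ℕ, MvPowerSeries.coeff β f ≠ 0 ∧ x = ∑ i, α i * (β i : ℝ)}

open Classical in
/-- The α-initial form `in_α(f)`: the part of `f` supported in weighted degree `w_α(f)`. -/
noncomputable def initForm {k : Type*} [Field k] {r : ℕ} (α : Fin r → ℝ)
    (f : MvPowerSeries (Fin r) k) : MvPowerSeries (Fin r) k :=
  fun β : Fin r →₀ ℕ =>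
    if (∑ i, α i * (β i : ℝ)) = wOrd α f then MvPowerSeries.coeff β f else 0

open MvPowerSeries Finsupp

theorem Finsupp.weight_eq_sum_mul {σ : Type*} [Fintype σ] (α : σ → ℝ) (β : σ →₀ ℕ) :
    weight α β = ∑ i, α i * (β i : ℝ) := by
  simp only [weight_eq_sum, nsmul_eq_mul, mul_comm]

theorem Finsupp.weight_nonneg {σ : Type*} {α : σ → ℝ} (hα : ∀ i, 0 ≤ α i) (β : σ →₀ ℕ) :
    0 ≤ weight α β := by
  rw [weight_apply]
  exact Finset.sum_nonneg fun i _ => nsmul_nonneg (hα i) _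

theorem Finsupp.finite_setOf_weight_le {σ : Type*} [Fintype σ] {α : σ → ℝ} (hα : ∀ i, 0 < α i)
    (C : ℝ) : {β : σ →₀ ℕ | weight α β ≤ C}.Finite := by
  classical
  refine (Finset.Iic (equivFunOnFinite.symm fun i => ⌈C / α i⌉₊)).finite_toSet.subset ?_
  intro β (hβ : weight α β ≤ C)
  simp only [Finset.coe_Iic, Set.mem_Iic]
  intro i
  have hi : β i * α i ≤ C := calc
    β i * α i = β i • α i := (nsmul_eq_mul _ _).symm
    _ ≤ ∑ j, β j • α j :=
      Finset.single_le_sum (fun j _ => nsmul_nonneg (hα j).le _) (Finset.mem_univ i)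
    _ = weight α β := (weight_eq_sum α β).symm
    _ ≤ C := hβ
  have : (β i : ℝ) ≤ C / α i := (le_div_iff₀ (hα i)).mpr hi
  simpa using Nat.cast_le.mp (this.trans (Nat.le_ceil _))

section InitialForm

variable {k : Type*} [Field k] {r : ℕ} {α : Fin r → ℝ} {f g : MvPowerSeries (Fin r) k}

theorem wOrd_eq_sInf (α : Fin r → ℝ) (f : MvPowerSeries (Fin r) k) :
    wOrd α f = sInf {x : ℝ | ∃ β, coeff β f ≠ 0 ∧ x = weight α β} := by
  simp only [weight_eq_sum_mul]
  rfl

theorem coeff_initForm (α : Fin r → ℝ) (f : MvPowerSeries (Fin r) k) (β : Fin r →₀ ℕ) :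
    coeff β (initForm α f) = if weight α β = wOrd α f then coeff β f else 0 := by
  rw [weight_eq_sum_mul, coeff_apply]
  rfl

theorem wOrd_le_weight (hα : ∀ i, 0 ≤ α i) {β : Fin r →₀ ℕ} (hβ : coeff β f ≠ 0) :
    wOrd α f ≤ weight α β := by
  rw [wOrd_eq_sInf]
  refine csInf_le ⟨0, ?_⟩ ⟨β, hβ, rfl⟩
  rintro _ ⟨γ, -, rfl⟩
  exact weight_nonneg hα γ

theorem coeff_eq_zero_of_weight_lt_wOrd (hα : ∀ i, 0 ≤ α i) {β : Fin r →₀ ℕ}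
    (hβ : weight α β < wOrd α f) : coeff β f = 0 := by
  by_contra h
  exact (wOrd_le_weight hα h).not_gt hβ

theorem wOrd_eq_of_forall_le_of_exists {c : ℝ} (hle : ∀ β, coeff β f ≠ 0 → c ≤ weight α β)
    (hc : ∃ β, coeff β f ≠ 0 ∧ weight α β = c) : wOrd α f = c := by
  rw [wOrd_eq_sInf]
  obtain ⟨β, hβ, rfl⟩ := hc
  refine IsLeast.csInf_eq ⟨⟨β, hβ, rfl⟩, ?_⟩
  rintro _ ⟨γ, hγ, rfl⟩
  exact hle γ hγ

-- The infimum is attained: at most finitely many exponents weigh less than a given one.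
theorem exists_coeff_ne_zero_weight_eq_wOrd (hα : ∀ i, 0 < α i) (hf : f ≠ 0) :
    ∃ β, coeff β f ≠ 0 ∧ weight α β = wOrd α f := by
  obtain ⟨β₀, hβ₀⟩ := (ne_zero_iff_exists_coeff_ne_zero f).mp hf
  set low := {β | coeff β f ≠ 0} ∩ {β | weight α β ≤ weight α β₀}
  have hlow : low.Finite := (finite_setOf_weight_le hα _).subset Set.inter_subset_right
  obtain ⟨β, ⟨hβ, hββ₀⟩, hmin⟩ :=
    Set.exists_min_image low (weight α) hlow ⟨β₀, hβ₀, le_refl (weight α β₀)⟩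
  refine ⟨β, hβ, (wOrd_eq_of_forall_le_of_exists (fun γ hγ => ?_) ⟨β, hβ, rfl⟩).symm⟩
  rcases le_or_gt (weight α γ) (weight α β₀) with h | h
  · exact hmin γ ⟨hγ, h⟩
  · exact hββ₀.trans h.le

theorem initForm_ne_zero (hα : ∀ i, 0 < α i) (hf : f ≠ 0) : initForm α f ≠ 0 := by
  obtain ⟨β, hβ, hβw⟩ := exists_coeff_ne_zero_weight_eq_wOrd hα hf
  refine (ne_zero_iff_exists_coeff_ne_zero _).mpr ⟨β, ?_⟩
  rwa [coeff_initForm, if_pos hβw]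

theorem coeff_mul_eq_zero_of_weight_lt (hα : ∀ i, 0 ≤ α i) {β : Fin r →₀ ℕ}
    (hβ : weight α β < wOrd α f + wOrd α g) : coeff β (f * g) = 0 := by
  rw [coeff_mul]
  refine Finset.sum_eq_zero fun p hp => ?_
  rw [Finset.HasAntidiagonal.mem_antidiagonal] at hp
  by_cases h₁ : coeff p.1 f = 0
  · rw [h₁, zero_mul]
  have h₂ : weight α p.2 < wOrd α g := by
    have := wOrd_le_weight hα h₁
    rw [← hp, map_add] at hβ
    linarith
  rw [coeff_eq_zero_of_weight_lt_wOrd hα h₂, mul_zero]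

-- A nonzero term has `wOrd f ≤ weight γ` and `wOrd g ≤ weight δ`, so the weights add up to
-- `wOrd f + wOrd g` exactly when both inequalities are equalities.
theorem coeff_initForm_mul_coeff_initForm (hα : ∀ i, 0 ≤ α i) (γ δ : Fin r →₀ ℕ) :
    coeff γ (initForm α f) * coeff δ (initForm α g) =
      if weight α (γ + δ) = wOrd α f + wOrd α g then coeff γ f * coeff δ g else 0 := by
  rw [coeff_initForm, coeff_initForm, map_add]
  by_cases h₁ : coeff γ f = 0
  · simp [h₁]
  by_cases h₂ : coeff δ g = 0
  · simp [h₂]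
  have := wOrd_le_weight hα h₁
  have := wOrd_le_weight hα h₂
  split_ifs <;> grind

theorem coeff_initForm_mul_initForm (hα : ∀ i, 0 ≤ α i) (β : Fin r →₀ ℕ) :
    coeff β (initForm α f * initForm α g) =
      if weight α β = wOrd α f + wOrd α g then coeff β (f * g) else 0 := by
  rw [coeff_mul, coeff_mul, Finset.ite_sum_zero]
  refine Finset.sum_congr rfl fun p hp => ?_
  rw [coeff_initForm_mul_coeff_initForm hα, Finset.HasAntidiagonal.mem_antidiagonal.mp hp]

theorem wOrd_mul (hα : ∀ i, 0 < α i) (hf : f ≠ 0) (hg : g ≠ 0) :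
    wOrd α (f * g) = wOrd α f + wOrd α g := by
  have hα' : ∀ i, 0 ≤ α i := fun i => (hα i).le
  obtain ⟨β, hβ⟩ := (ne_zero_iff_exists_coeff_ne_zero _).mp
    (mul_ne_zero (initForm_ne_zero hα hf) (initForm_ne_zero hα hg))
  rw [coeff_initForm_mul_initForm hα'] at hβ
  split_ifs at hβ with hβw
  · exact wOrd_eq_of_forall_le_of_exists
      (fun γ hγ => not_lt.mp (hγ ∘ coeff_mul_eq_zero_of_weight_lt hα')) ⟨β, hβ, hβw⟩
  · exact absurd rfl hβ

end InitialForm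

theorem initForm_mul_general
    (k : Type*) [Field k] (r : ℕ) (α : Fin r → ℝ) (hα : ∀ i, 0 < α i)
    (f g : MvPowerSeries (Fin r) k) (hf : f ≠ 0) (hg : g ≠ 0) :
    initForm α (f * g) = initForm α f * initForm α g := by
  ext β
  rw [coeff_initForm, wOrd_mul hα hf hg, coeff_initForm_mul_initForm fun i => (hα i).le]

/-- **Multiplicativity of initial forms.**  Let `k` be a field, `r ≥ 1`, and let
`α : Fin r → ℝ` have positive entries.  For nonzero `f, g : MvPowerSeries (Fin r) k`,
the α-initial form of the product is the product of the α-initial forms: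
`in_α(f * g) = in_α(f) * in_α(g)`. -/
theorem initForm_mul
    (k : Type*) [Field k] (r : ℕ) (hr : 0 < r) (α : Fin r → ℝ) (hα : ∀ i, 0 < α i)
    (f g : MvPowerSeries (Fin r) k) (hf : f ≠ 0) (hg : g ≠ 0) :
    initForm α (f * g) = initForm α f * initForm α g :=
  initForm_mul_general k r α hα f g hf hg
end

section
/- Let R be an integral domain and let t ∈ R be nonzero. For each n ≥ 1, let M_n be an R-module annihilated by t^n that is free as a module over R⧸(t^n), and let f_n : M_{n+1} → M_n be R-linear transition maps. Then the inverse limit is t-torsion-free: if x = (x_n)_{n≥1} ∈ ∏_n M_n satisfies f_n(x_{n+1}) = x_n for all n ≥ 1 and t • x_n = 0 for all n ≥ 1, then x_n = 0 for all n ≥ 1. -/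
theorem Ideal.Quotient.mk_pow_dvd_of_mk_mul_eq_zero {R : Type*} [CommRing R] [IsDomain R]
    {t : R} (ht : t ≠ 0) {n : ℕ} {c : R ⧸ Ideal.span {t ^ (n + 1)}}
    (hc : Ideal.Quotient.mk _ t * c = 0) : Ideal.Quotient.mk _ (t ^ n) ∣ c := by
  obtain ⟨r, rfl⟩ := Ideal.Quotient.mk_surjective c
  rw [← map_mul, Ideal.Quotient.eq_zero_iff_mem, Ideal.mem_span_singleton] at hc
  obtain ⟨s, hs⟩ := hc
  have hr : r = t ^ n * s := mul_left_cancel₀ ht (by rw [hs, pow_succ', mul_assoc])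
  exact ⟨Ideal.Quotient.mk _ s, by rw [hr, map_mul]⟩

theorem Module.Free.exists_eq_smul_of_smul_eq_zero {S M : Type*} [CommRing S] [AddCommGroup M]
    [Module S M] [Module.Free S M] {a b : S} (hab : ∀ c : S, a * c = 0 → b ∣ c) {y : M}
    (hy : a • y = 0) : ∃ z : M, y = b • z := by
  let B := Module.Free.chooseBasis S M
  have hcoord : ∀ i, b ∣ B.repr y i := fun i =>
    hab _ (by simpa using congrArg (fun m => B.repr m i) hy)
  choose d hd using hcoord
  refine ⟨∑ i ∈ (B.repr y).support, d i • B i, ?_⟩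
  calc y = ∑ i ∈ (B.repr y).support, B.repr y i • B i := (B.linearCombination_repr y).symm
    _ = b • ∑ i ∈ (B.repr y).support, d i • B i := by simp only [Finset.smul_sum, hd, mul_smul]

theorem Module.IsTorsionBy.exists_eq_pow_smul_of_smul_eq_zero {R M : Type*} [CommRing R]
    [IsDomain R] [AddCommGroup M] [Module R M] {t : R} (ht : t ≠ 0) {n : ℕ}
    (htor : Module.IsTorsionBy R M (t ^ (n + 1)))
    (hfree : letI : Module (R ⧸ Ideal.span {t ^ (n + 1)}) M := htor.module
      Module.Free (R ⧸ Ideal.span {t ^ (n + 1)}) M)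
    {y : M} (hy : t • y = 0) : ∃ z : M, y = t ^ n • z := by
  let _ : Module (R ⧸ Ideal.span {t ^ (n + 1)}) M := htor.module
  obtain ⟨z, hz⟩ := Module.Free.exists_eq_smul_of_smul_eq_zero
    (fun _ => Ideal.Quotient.mk_pow_dvd_of_mk_mul_eq_zero ht) (by rwa [htor.mk_smul] : _ • y = 0)
  exact ⟨z, by rwa [htor.mk_smul] at hz⟩

/-- **The inverse limit of free `R⧸(tⁿ)`-modules is `t`-torsion-free.**  Let `R` be an
integral domain and `t ∈ R` nonzero.  For each `n ≥ 1`, let `M n` be an `R`-module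
annihilated by `t ^ n` which is free as a module over `R ⧸ (t ^ n)`, with `R`-linear
transition maps `f n : M (n+1) → M n`.  If `x = (x n)` is a compatible sequence with
`t • x n = 0` for all `n ≥ 1`, then `x n = 0` for all `n ≥ 1`. -/
theorem inverseLimit_torsionFree
    (R : Type*) [CommRing R] [IsDomain R] (t : R) (ht : t ≠ 0)
    (M : ℕ → Type*) [∀ n, AddCommGroup (M n)] [∀ n, Module R (M n)]
    (htor : ∀ n, 1 ≤ n → Module.IsTorsionBy R (M n) (t ^ n))
    (hfree : ∀ n (hn : 1 ≤ n),
      letI : Module (R ⧸ Ideal.span {t ^ n}) (M n) := (htor n hn).module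
      Module.Free (R ⧸ Ideal.span {t ^ n}) (M n))
    (f : ∀ n, M (n + 1) →ₗ[R] M n)
    (x : ∀ n, M n)
    (hcomp : ∀ n, 1 ≤ n → f n (x (n + 1)) = x n)
    (hx : ∀ n, 1 ≤ n → t • x n = 0) :
    ∀ n, 1 ≤ n → x n = 0 := by
  intro n hn
  obtain ⟨z, hz⟩ := (htor (n + 1) n.succ_pos).exists_eq_pow_smul_of_smul_eq_zero ht
    (hfree (n + 1) n.succ_pos) (hx (n + 1) n.succ_pos)
  rw [← hcomp n hn, hz, map_smul, htor n hn]
end
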